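/- arXiv:2204.00009 — 6 statements merged into one kernel-verified Lean document; each statement's English description precedes it below -/
import Mathlib

section
/- Let A be a unital C*-algebra with identity 1, let θ be a real number, and suppose U, V are unitaries in A with U V = exp(2πiθ) V U. Then in the 2×2 matrix algebra M_2(A), the scalar exp(πiθ) · 1 is a product of four self-adjoint unitaries. Explicitly, with R1 = [[0, U],[U*, 0]], R2 = [[0,1],[1,0]], R3 = exp(πiθ)[[0, U*V],[UV*, 0]], R4 = [[0, V],[V*, 0]], each R_i is a self-adjoint unitary in M_2(A) and R1 R2 R3 R4 = exp(πiθ) · 1. -/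
set_option linter.unusedSectionVars false

section helpers

variable {A : Type*} [Ring A] [StarRing A] [Module ℂ A]

lemma mulM (a b c d : A) : !![0,a;b,0] * !![0,c;d,0] = !![a*d,0;0,b*c] := by
  ext i j; fin_cases i <;> fin_cases j <;> simp [Matrix.mul_apply, Fin.sum_univ_two]

lemma mulD (a b c d : A) : !![a,0;0,b] * !![c,0;0,d] = !![a*c,0;0,b*d] := by
  ext i j; fin_cases i <;> fin_cases j <;> simp [Matrix.mul_apply, Fin.sum_univ_two]

lemma mulDM (a b c d : A) : !![a,0;0,b] * !![0,c;d,0] = !![0,a*c;b*d,0] := by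
  ext i j; fin_cases i <;> fin_cases j <;> simp [Matrix.mul_apply, Fin.sum_univ_two]

lemma starM (a b : A) : star !![(0:A),a;b,0] = !![0, star b; star a, 0] := by
  ext i j; fin_cases i <;> fin_cases j <;> simp [Matrix.star_apply]

lemma smulM (z : ℂ) (a b : A) : z • !![(0:A),a;b,0] = !![0, z•a; z•b, 0] := by
  ext i j; fin_cases i <;> fin_cases j <;> simp

lemma smulD (z : ℂ) (a b : A) : z • !![a,(0:A);0,b] = !![z•a, 0; 0, z•b] := by
  ext i j; fin_cases i <;> fin_cases j <;> simp

end helpers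

theorem stmt4 {A : Type*} [NormedRing A] [StarRing A] [CStarRing A]
    [NormedAlgebra ℂ A] [StarModule ℂ A] [CompleteSpace A]
    (θ : ℝ) (U V : A) (hU : U ∈ unitary A) (hV : V ∈ unitary A)
    (hcomm : U * V = Complex.exp (2 * Real.pi * θ * Complex.I) • (V * U)) :
    let R1 : Matrix (Fin 2) (Fin 2) A := !![0, U; star U, 0]
    let R2 : Matrix (Fin 2) (Fin 2) A := !![0, 1; 1, 0]
    let R3 : Matrix (Fin 2) (Fin 2) A :=
      Complex.exp (Real.pi * θ * Complex.I) • !![0, star U * V; U * star V, 0]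
    let R4 : Matrix (Fin 2) (Fin 2) A := !![0, V; star V, 0]
    (R1 ∈ unitary (Matrix (Fin 2) (Fin 2) A) ∧ IsSelfAdjoint R1) ∧
    (R2 ∈ unitary (Matrix (Fin 2) (Fin 2) A) ∧ IsSelfAdjoint R2) ∧
    (R3 ∈ unitary (Matrix (Fin 2) (Fin 2) A) ∧ IsSelfAdjoint R3) ∧
    (R4 ∈ unitary (Matrix (Fin 2) (Fin 2) A) ∧ IsSelfAdjoint R4) ∧
    R1 * R2 * R3 * R4 =
      Complex.exp (Real.pi * θ * Complex.I) • (1 : Matrix (Fin 2) (Fin 2) A) := by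
  intro R1 R2 R3 R4
  obtain ⟨hU1, hU2⟩ := Unitary.mem_iff.mp hU
  obtain ⟨hV1, hV2⟩ := Unitary.mem_iff.mp hV
  set e : ℂ := Complex.exp (Real.pi * θ * Complex.I) with he
  set e2 : ℂ := Complex.exp (2 * Real.pi * θ * Complex.I) with he2
  have hse : star e = Complex.exp (-(Real.pi * θ * Complex.I)) := by
    rw [show (star e : ℂ) = (starRingEnd ℂ) e from rfl, he, ← Complex.exp_conj]
    congr 1
    simp [map_mul, Complex.conj_I, Complex.conj_ofReal]
  have hse2 : star e2 = Complex.exp (-(2 * Real.pi * θ * Complex.I)) := by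
    rw [show (star e2 : ℂ) = (starRingEnd ℂ) e2 from rfl, he2, ← Complex.exp_conj]
    congr 1
    simp [map_mul, Complex.conj_I, Complex.conj_ofReal, map_ofNat]
  have h_ee : star e * e = 1 := by rw [hse, he, ← Complex.exp_add]; simp
  have h_ee' : e * star e = 1 := by rw [mul_comm]; exact h_ee
  have h_see2 : star e * e2 = e := by
    rw [hse, he2, he, ← Complex.exp_add]; ring_nf
  have h_ese2 : e * star e2 = star e := by
    rw [hse2, he, hse, ← Complex.exp_add]; ring_nf
  -- key commutation consequences
  have h1 : V * star U = e2 • (star U * V) := by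
    calc V * star U = star U * (U * V) * star U := by
          simp only [← mul_assoc]; rw [hU1, one_mul]
      _ = star U * (e2 • (V * U)) * star U := by rw [hcomm]
      _ = e2 • (star U * V * (U * star U)) := by
          simp only [mul_smul_comm, smul_mul_assoc, mul_assoc]
      _ = e2 • (star U * V) := by rw [hU2, mul_one]
  have h2 : U * star V = star e2 • (star V * U) := by
    have := congrArg star h1
    simpa [star_smul, star_mul, mul_assoc] using this
  have key1 : star e • (V * star U) = e • (star U * V) := by
    rw [h1, smul_smul, h_see2]
  have key2 : e • (U * star V) = star e • (star V * U) := by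
    rw [h2, smul_smul, h_ese2]
  -- element products
  have p1 : (V * star U) * (U * star V) = 1 := by
    rw [mul_assoc, ← mul_assoc (star U), hU1, one_mul, hV2]
  have p2 : (star V * U) * (star U * V) = 1 := by
    rw [mul_assoc, ← mul_assoc U, hU2, one_mul, hV1]
  have p3 : (star U * V) * (star V * U) = 1 := by
    rw [mul_assoc, ← mul_assoc V, hV2, one_mul, hU1]
  have p4 : (U * star V) * (V * star U) = 1 := by
    rw [mul_assoc, ← mul_assoc (star V), hV1, one_mul, hU2]
  refine ⟨⟨?_, ?_⟩, ⟨?_, ?_⟩, ⟨?_, ?_⟩, ⟨?_, ?_⟩, ?_⟩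
  · rw [Unitary.mem_iff]
    constructor <;>
      simp only [R1, starM, star_star, mulM, hU1, hU2, Matrix.one_fin_two]
  · show star R1 = R1
    simp only [R1, starM, star_star]
  · rw [Unitary.mem_iff]
    constructor <;>
      simp only [R2, starM, star_one, mulM, one_mul, Matrix.one_fin_two]
  · show star R2 = R2
    simp only [R2, starM, star_one]
  · -- R3 unitary
    rw [Unitary.mem_iff]
    constructor
    · show star (e • !![0, star U * V; U * star V, 0]) *
        (e • !![0, star U * V; U * star V, 0]) = 1
      rw [star_smul, starM, star_mul, star_mul, star_star, star_star,
        smul_mul_assoc, mul_smul_comm, smul_smul, h_ee, one_smul, mulM, p1, p2,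
        Matrix.one_fin_two]
    · show (e • !![0, star U * V; U * star V, 0]) *
        star (e • !![0, star U * V; U * star V, 0]) = 1
      rw [star_smul, starM, star_mul, star_mul, star_star, star_star,
        smul_mul_assoc, mul_smul_comm, smul_smul, h_ee', one_smul, mulM, p3, p4,
        Matrix.one_fin_two]
  · -- R3 selfadjoint
    show star (e • !![0, star U * V; U * star V, 0]) =
      e • !![0, star U * V; U * star V, 0]
    rw [star_smul, starM, star_mul, star_mul, star_star, star_star,
      smulM, smulM, key1, ← key2]
  · rw [Unitary.mem_iff]
    constructor <;>
      simp only [R4, starM, star_star, mulM, hV1, hV2, Matrix.one_fin_two]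
  · show star R4 = R4
    simp only [R4, starM, star_star]
  · -- product
    show !![0, U; star U, 0] * !![0, 1; 1, 0] *
        (e • !![0, star U * V; U * star V, 0]) * !![0, V; star V, 0] =
      e • (1 : Matrix (Fin 2) (Fin 2) A)
    rw [mulM, mul_one, mul_one, Matrix.mul_smul, mulDM, Matrix.smul_mul, mulM,
      Matrix.one_fin_two, smulD,
      show U * (star U * V) * star V = 1 by
        rw [← mul_assoc, hU2, one_mul, hV2],
      show star U * (U * star V) * V = 1 by
        rw [← mul_assoc, hU1, one_mul, hV1]]
    exact (smulD e 1 1).symm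
end

section
/- Let U be a unitary in M_n(ℂ) that is diagonal, U = diag(λ1, ..., λn) with each λj on the unit circle, and suppose det(U) = λ1 ⋯ λn ∈ {1,-1}. Then U can be written as the product of four self-adjoint unitary matrices in M_n(ℂ). -/
open Matrix Finset

namespace Stmt8Aux

/-- "Twisted permutation" matrix: entry `d i` at position `(i, f i)`. -/
noncomputable def Smat {n : ℕ} (f : Fin n → Fin n) (d : Fin n → ℂ) :
    Matrix (Fin n) (Fin n) ℂ := fun i j => if j = f i then d i else 0

lemma Smat_selfAdjoint {n : ℕ} (f : Fin n → Fin n) (d : Fin n → ℂ)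
    (hf : ∀ j, f (f j) = j)
    (hdc : ∀ j, d (f j) = (starRingEnd ℂ) (d j)) : IsSelfAdjoint (Smat f d) := by
  show (Smat f d)ᴴ = Smat f d
  ext i j
  show star (if i = f j then d j else 0) = if j = f i then d i else 0
  by_cases h : i = f j
  · have h' : j = f i := by rw [h, hf]
    rw [if_pos h, if_pos h', h', hdc]
    simp
  · have h' : ¬ j = f i := fun hc => h (by rw [hc, hf])
    rw [if_neg h, if_neg h', star_zero]

lemma Smat_mul {n : ℕ} (f : Fin n → Fin n) (hf : ∀ j, f (f j) = j) (d e : Fin n → ℂ) :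
    Smat f d * Smat f e = Matrix.diagonal (fun i => d i * e (f i)) := by
  ext i j
  simp only [Matrix.mul_apply, Smat, Matrix.diagonal_apply, ite_mul, zero_mul]
  rw [Finset.sum_ite_eq' Finset.univ (f i) (fun k => d i * (if j = f k then e k else 0))]
  simp only [Finset.mem_univ, if_true, hf, mul_ite, mul_zero]
  by_cases h : i = j
  · rw [if_pos h.symm, if_pos h]
  · rw [if_neg (fun hc => h hc.symm), if_neg h]

lemma Smat_mem_unitary {n : ℕ} (f : Fin n → Fin n) (d : Fin n → ℂ)
    (hf : ∀ j, f (f j) = j)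
    (hdc : ∀ j, d (f j) = (starRingEnd ℂ) (d j))
    (hd1 : ∀ j, d j * (starRingEnd ℂ) (d j) = 1) :
    Smat f d ∈ unitary (Matrix (Fin n) (Fin n) ℂ) := by
  have hsa := Smat_selfAdjoint f d hf hdc
  have hsq : Smat f d * Smat f d = 1 := by
    rw [Smat_mul f hf d d]
    have : (fun i => d i * d (f i)) = fun _ => (1 : ℂ) := by
      funext i; rw [hdc i, hd1 i]
    rw [this, Matrix.diagonal_one]
  constructor
  · show star (Smat f d) * Smat f d = 1
    rw [hsa.star_eq, hsq]
  · show Smat f d * star (Smat f d) = 1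
    rw [hsa.star_eq, hsq]

/-- A diagonal matrix whose entries pair off into conjugate pairs under an involution
is a product of two self-adjoint unitaries. -/
lemma diagonal_eq_two_symmetries {n : ℕ} (f : Fin n → Fin n) (d : Fin n → ℂ)
    (hf : ∀ j, f (f j) = j)
    (hdc : ∀ j, d (f j) = (starRingEnd ℂ) (d j))
    (hd1 : ∀ j, d j * (starRingEnd ℂ) (d j) = 1) :
    ∃ R1 R2 : Matrix (Fin n) (Fin n) ℂ,
      (R1 ∈ unitary (Matrix (Fin n) (Fin n) ℂ) ∧ IsSelfAdjoint R1) ∧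
      (R2 ∈ unitary (Matrix (Fin n) (Fin n) ℂ) ∧ IsSelfAdjoint R2) ∧
      Matrix.diagonal d = R1 * R2 := by
  refine ⟨Smat f d, Smat f (fun _ => 1), ⟨?_, ?_⟩, ⟨?_, ?_⟩, ?_⟩
  · exact Smat_mem_unitary f d hf hdc hd1
  · exact Smat_selfAdjoint f d hf hdc
  · exact Smat_mem_unitary f (fun _ => 1) hf (by simp) (by simp)
  · exact Smat_selfAdjoint f (fun _ => 1) hf (by simp)
  · rw [Smat_mul f hf]
    simp

/-- Partial products of the (extended) sequence of eigenvalues. -/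
noncomputable def Pprod {n : ℕ} (lam : Fin n → ℂ) (m : ℕ) : ℂ :=
  ∏ i ∈ Finset.range m, if h : i < n then lam ⟨i, h⟩ else 1

lemma Pprod_succ {n : ℕ} (lam : Fin n → ℂ) (m : ℕ) :
    Pprod lam (m + 1) = Pprod lam m * (if h : m < n then lam ⟨m, h⟩ else 1) := by
  rw [Pprod, Finset.prod_range_succ]; rfl

lemma Pprod_mul_conj {n : ℕ} (lam : Fin n → ℂ) (hlam : ∀ j, ‖lam j‖ = 1)
    (m : ℕ) : Pprod lam m * (starRingEnd ℂ) (Pprod lam m) = 1 := by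
  induction m with
  | zero => simp [Pprod]
  | succ k ih =>
    rw [Pprod_succ, _root_.map_mul]
    by_cases h : k < n
    · rw [dif_pos h]
      have h1 : lam ⟨k, h⟩ * (starRingEnd ℂ) (lam ⟨k, h⟩) = 1 := by
        rw [Complex.mul_conj, ← Complex.sq_norm, hlam ⟨k, h⟩]; norm_num
      calc Pprod lam k * lam ⟨k, h⟩ *
            ((starRingEnd ℂ) (Pprod lam k) * (starRingEnd ℂ) (lam ⟨k, h⟩))
          = (Pprod lam k * (starRingEnd ℂ) (Pprod lam k)) *
            (lam ⟨k, h⟩ * (starRingEnd ℂ) (lam ⟨k, h⟩)) := by ring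
        _ = 1 := by rw [ih, h1, one_mul]
    · rw [dif_neg h]; simpa using ih

lemma Pprod_n {n : ℕ} (lam : Fin n → ℂ) : Pprod lam n = ∏ i, lam i := by
  rw [Pprod, ← Fin.prod_univ_eq_prod_range (fun i => if h : i < n then lam ⟨i, h⟩ else 1) n]
  exact Finset.prod_congr rfl (fun i _ => by rw [dif_pos i.isLt])

/-- Involution pairing `2k ↔ 2k+1` (fixing the last index when `n` is odd). -/
def gV (n m : ℕ) : ℕ :=
  if m % 2 = 0 then (if m + 1 < n then m + 1 else m) else m - 1

/-- Involution pairing `2k+1 ↔ 2k+2` (fixing `0`, and the last index when `n` is even). -/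
def gW (n m : ℕ) : ℕ :=
  if m % 2 = 1 then (if m + 1 < n then m + 1 else m) else (if m = 0 then 0 else m - 1)

lemma gV_lt {n m : ℕ} (hm : m < n) : gV n m < n := by
  unfold gV; split_ifs <;> omega

lemma gW_lt {n m : ℕ} (hm : m < n) : gW n m < n := by
  unfold gW; split_ifs <;> omega

lemma gV_invol {n m : ℕ} (hm : m < n) : gV n (gV n m) = m := by
  by_cases h1 : m % 2 = 0 <;> by_cases h2 : m + 1 < n <;>
    simp only [gV, h1, h2, if_true, if_false] <;> split_ifs <;>
    first | exact absurd ‹False› (fun h => h) | omega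

lemma gW_invol {n m : ℕ} (hm : m < n) : gW n (gW n m) = m := by
  by_cases h1 : m % 2 = 1 <;> by_cases h2 : m + 1 < n <;> by_cases h3 : m = 0 <;>
    simp only [gW, h1, h2, h3, if_true, if_false] <;> split_ifs <;>
    first | exact absurd ‹False› (fun h => h) | omega

noncomputable def vv {n : ℕ} (lam : Fin n → ℂ) (m : ℕ) : ℂ :=
  if m % 2 = 0 then Pprod lam (m + 1) else (starRingEnd ℂ) (Pprod lam m)

noncomputable def ww {n : ℕ} (lam : Fin n → ℂ) (m : ℕ) : ℂ :=
  if m % 2 = 0 then (starRingEnd ℂ) (Pprod lam m) else Pprod lam (m + 1)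

lemma vv_conj {n : ℕ} (lam : Fin n → ℂ)
    (hreal : (starRingEnd ℂ) (Pprod lam n) = Pprod lam n) {m : ℕ} (hm : m < n) :
    vv lam (gV n m) = (starRingEnd ℂ) (vv lam m) := by
  unfold gV vv
  by_cases h0 : m % 2 = 0
  · rw [if_pos h0, if_pos h0]
    by_cases h1 : m + 1 < n
    · rw [if_pos h1, if_neg (by omega : ¬ (m + 1) % 2 = 0)]
    · rw [if_neg h1, if_pos h0]
      have : m + 1 = n := by omega
      rw [this, hreal]
  · rw [if_neg h0, if_neg h0]
    rw [if_pos (by omega : (m - 1) % 2 = 0)]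
    have : m - 1 + 1 = m := by omega
    rw [this]
    simp

lemma ww_conj {n : ℕ} (lam : Fin n → ℂ)
    (hreal : (starRingEnd ℂ) (Pprod lam n) = Pprod lam n) {m : ℕ} (hm : m < n) :
    ww lam (gW n m) = (starRingEnd ℂ) (ww lam m) := by
  unfold gW ww
  by_cases h0 : m % 2 = 1
  · rw [if_pos h0, if_neg (by omega : ¬ m % 2 = 0)]
    by_cases h1 : m + 1 < n
    · rw [if_pos h1, if_pos (by omega : (m + 1) % 2 = 0)]
    · rw [if_neg h1, if_neg (by omega : ¬ m % 2 = 0)]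
      have : m + 1 = n := by omega
      rw [this, hreal]
  · rw [if_neg h0, if_pos (by omega : m % 2 = 0)]
    by_cases hz : m = 0
    · subst hz
      simp [Pprod]
    · rw [if_neg hz, if_neg (by omega : ¬ (m - 1) % 2 = 0)]
      have : m - 1 + 1 = m := by omega
      rw [this]
      simp

lemma vv_uni {n : ℕ} (lam : Fin n → ℂ) (hlam : ∀ j, ‖lam j‖ = 1) (m : ℕ) :
    vv lam m * (starRingEnd ℂ) (vv lam m) = 1 := by
  unfold vv
  split_ifs
  · exact Pprod_mul_conj lam hlam _
  · simp only [RingHomInvPair.comp_apply_eq]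
    rw [mul_comm]; exact Pprod_mul_conj lam hlam _

lemma ww_uni {n : ℕ} (lam : Fin n → ℂ) (hlam : ∀ j, ‖lam j‖ = 1) (m : ℕ) :
    ww lam m * (starRingEnd ℂ) (ww lam m) = 1 := by
  unfold ww
  split_ifs
  · simp only [RingHomInvPair.comp_apply_eq]
    rw [mul_comm]; exact Pprod_mul_conj lam hlam _
  · exact Pprod_mul_conj lam hlam _

lemma vv_mul_ww {n : ℕ} (lam : Fin n → ℂ) (hlam : ∀ j, ‖lam j‖ = 1)
    {m : ℕ} (hm : m < n) : vv lam m * ww lam m = lam ⟨m, hm⟩ := by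
  have key : Pprod lam (m + 1) * (starRingEnd ℂ) (Pprod lam m) = lam ⟨m, hm⟩ := by
    rw [Pprod_succ, dif_pos hm]
    calc Pprod lam m * lam ⟨m, hm⟩ * (starRingEnd ℂ) (Pprod lam m)
        = lam ⟨m, hm⟩ * (Pprod lam m * (starRingEnd ℂ) (Pprod lam m)) := by ring
      _ = lam ⟨m, hm⟩ := by rw [Pprod_mul_conj lam hlam, mul_one]
  unfold vv ww
  split_ifs
  · exact key
  · rw [mul_comm]; exact key

end Stmt8Aux

open Stmt8Aux
theorem stmt8 {n : ℕ} (lam : Fin n → ℂ) (hlam : ∀ j, ‖lam j‖ = 1)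
    (hdet : (Matrix.diagonal lam).det = 1 ∨ (Matrix.diagonal lam).det = -1) :
    ∃ R1 R2 R3 R4 : Matrix (Fin n) (Fin n) ℂ,
      (R1 ∈ unitary (Matrix (Fin n) (Fin n) ℂ) ∧ IsSelfAdjoint R1) ∧
      (R2 ∈ unitary (Matrix (Fin n) (Fin n) ℂ) ∧ IsSelfAdjoint R2) ∧
      (R3 ∈ unitary (Matrix (Fin n) (Fin n) ℂ) ∧ IsSelfAdjoint R3) ∧
      (R4 ∈ unitary (Matrix (Fin n) (Fin n) ℂ) ∧ IsSelfAdjoint R4) ∧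
      Matrix.diagonal lam = R1 * R2 * R3 * R4 := by
  have hreal : (starRingEnd ℂ) (Pprod lam n) = Pprod lam n := by
    have h : Pprod lam n = (Matrix.diagonal lam).det := by
      rw [Matrix.det_diagonal, Pprod_n]
    rcases hdet with hd | hd <;> rw [h, hd] <;> simp
  let fV : Fin n → Fin n := fun j => ⟨gV n j.val, gV_lt j.isLt⟩
  let fW : Fin n → Fin n := fun j => ⟨gW n j.val, gW_lt j.isLt⟩
  let v : Fin n → ℂ := fun j => vv lam j.val
  let w : Fin n → ℂ := fun j => ww lam j.val
  have hfV : ∀ j, fV (fV j) = j := fun j => Fin.ext (gV_invol j.isLt)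
  have hfW : ∀ j, fW (fW j) = j := fun j => Fin.ext (gW_invol j.isLt)
  have hvc : ∀ j, v (fV j) = (starRingEnd ℂ) (v j) := fun j => vv_conj lam hreal j.isLt
  have hwc : ∀ j, w (fW j) = (starRingEnd ℂ) (w j) := fun j => ww_conj lam hreal j.isLt
  have hv1 : ∀ j, v j * (starRingEnd ℂ) (v j) = 1 := fun j => vv_uni lam hlam j.val
  have hw1 : ∀ j, w j * (starRingEnd ℂ) (w j) = 1 := fun j => ww_uni lam hlam j.val
  obtain ⟨R1, R2, h1, h2, hV⟩ := diagonal_eq_two_symmetries fV v hfV hvc hv1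
  obtain ⟨R3, R4, h3, h4, hW⟩ := diagonal_eq_two_symmetries fW w hfW hwc hw1
  refine ⟨R1, R2, R3, R4, h1, h2, h3, h4, ?_⟩
  have hdiag : Matrix.diagonal lam = Matrix.diagonal v * Matrix.diagonal w := by
    rw [Matrix.diagonal_mul_diagonal]
    refine congrArg _ (funext fun j => ?_)
    exact (vv_mul_ww lam hlam j.isLt).symm
  rw [hdiag, hV, hW, ← mul_assoc]
end

section
/- Every unitary matrix U in U(n) with det(U) ∈ {1, -1} is a product of four self-adjoint unitary matrices in M_n(ℂ). -/
open Matrix Complex Module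

namespace Radjavi


variable {n : ℕ}

/-- The "weighted pairing" matrix. -/
def S (f : Fin n → Fin n) (a : Fin n → ℂ) : Matrix (Fin n) (Fin n) ℂ :=
  Matrix.of fun j k => if k = f j then a j else 0

theorem S_conjTranspose (f : Fin n → Fin n) (hf : ∀ j, f (f j) = j)
    (a : Fin n → ℂ) (ha : ∀ j, a (f j) = starRingEnd ℂ (a j)) :
    (S f a)ᴴ = S f a := by
  ext j k
  simp only [S, conjTranspose_apply, of_apply, star_def]
  by_cases h : k = f j
  · have h' : j = f k := by rw [h, hf]
    rw [if_pos h', if_pos h, h, ha, Complex.conj_conj]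
  · have h' : j ≠ f k := by
      intro hc; exact h (by rw [hc, hf])
    simp [if_neg h', if_neg h]

theorem S_mul_S (f : Fin n → Fin n) (hf : ∀ j, f (f j) = j)
    (a b : Fin n → ℂ) :
    S f a * S f b = Matrix.diagonal (fun j => a j * b (f j)) := by
  ext j l
  simp only [S, Matrix.mul_apply, of_apply, diagonal_apply]
  rw [Finset.sum_eq_single (f j)]
  · simp only [if_pos rfl]
    rw [hf]
    by_cases h : l = j
    · simp [h]
    · have : j ≠ l := fun hc => h hc.symm
      simp [if_neg h, if_neg this]
  · intro k _ hk
    simp [if_neg hk]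
  · intro h; exact absurd (Finset.mem_univ _) h

/-- If `f` is an involution and `a` is conjugate-compatible and unimodular,
then `S f a` is a self-adjoint unitary. -/
theorem S_selfAdjoint_unitary (f : Fin n → Fin n) (hf : ∀ j, f (f j) = j)
    (a : Fin n → ℂ) (ha : ∀ j, a (f j) = starRingEnd ℂ (a j))
    (hu : ∀ j, starRingEnd ℂ (a j) * a j = 1) :
    S f a ∈ unitary (Matrix (Fin n) (Fin n) ℂ) ∧ IsSelfAdjoint (S f a) := by
  have hsa : (S f a)ᴴ = S f a := S_conjTranspose f hf a ha
  have hsq : S f a * S f a = 1 := by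
    rw [S_mul_S f hf]
    have : (fun j => a j * a (f j)) = fun _ => (1:ℂ) := by
      funext j
      rw [ha j, mul_comm, hu j]
    rw [this, diagonal_one]
  constructor
  · constructor
    · show star (S f a) * S f a = 1
      rw [star_eq_conjTranspose, hsa, hsq]
    · show S f a * star (S f a) = 1
      rw [star_eq_conjTranspose, hsa, hsq]
  · exact hsa

/-- Diagonal unitary with conjugate-pairing condition is a product of two
self-adjoint unitaries. -/
theorem diagonal_eq_two_symm (f : Fin n → Fin n) (hf : ∀ j, f (f j) = j)
    (c : Fin n → ℂ) (hc : ∀ j, c (f j) = starRingEnd ℂ (c j))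
    (hu : ∀ j, starRingEnd ℂ (c j) * c j = 1) :
    Matrix.diagonal c = S f (fun _ => 1) * S f (fun j => c (f j)) ∧
      (S f (fun _ => 1) ∈ unitary (Matrix (Fin n) (Fin n) ℂ) ∧ IsSelfAdjoint (S f (fun _ => 1))) ∧
      (S f (fun j => c (f j)) ∈ unitary (Matrix (Fin n) (Fin n) ℂ) ∧
        IsSelfAdjoint (S f (fun j => c (f j)))) := by
  refine ⟨?_, ?_, ?_⟩
  · rw [S_mul_S f hf]
    refine congrArg _ (funext fun j => ?_)
    rw [hf, one_mul]
  · exact S_selfAdjoint_unitary f hf _ (fun j => by simp) (fun j => by simp)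
  · refine S_selfAdjoint_unitary f hf _ (fun j => ?_) (fun j => ?_)
    · rw [hf, hc j, Complex.conj_conj]
    · exact hu (f j)

theorem exists_split (d : Fin n → ℂ) (hd : ∀ i, starRingEnd ℂ (d i) * d i = 1)
    (hdet : (∏ i, d i) = 1 ∨ (∏ i, d i) = -1) :
    ∃ (f g : Fin n → Fin n) (c e : Fin n → ℂ),
      (∀ j, f (f j) = j) ∧ (∀ j, g (g j) = j) ∧
      (∀ j, c (f j) = starRingEnd ℂ (c j)) ∧ (∀ j, e (g j) = starRingEnd ℂ (e j)) ∧
      (∀ j, starRingEnd ℂ (c j) * c j = 1) ∧ (∀ j, starRingEnd ℂ (e j) * e j = 1) ∧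
      (∀ j, c j * e j = d j) := by
  classical
  set d' : ℕ → ℂ := fun i => if h : i < n then d ⟨i, h⟩ else 1 with hd'
  have hd'u : ∀ i, starRingEnd ℂ (d' i) * d' i = 1 := by
    intro i
    by_cases h : i < n
    · simp only [hd', dif_pos h]; exact hd _
    · simp [hd', dif_neg h]
  set Q : ℕ → ℂ := fun j => ∏ i ∈ Finset.range j, d' i with hQ
  have hQs : ∀ j, Q (j + 1) = Q j * d' j := fun j => Finset.prod_range_succ _ _
  have hQu : ∀ j, starRingEnd ℂ (Q j) * Q j = 1 := by
    intro j
    induction j with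
    | zero => simp [hQ]
    | succ k ih =>
      rw [hQs, _root_.map_mul]
      calc starRingEnd ℂ (Q k) * starRingEnd ℂ (d' k) * (Q k * d' k)
          = (starRingEnd ℂ (Q k) * Q k) * (starRingEnd ℂ (d' k) * d' k) := by ring
        _ = 1 := by rw [ih, hd'u, one_mul]
  have hQn : starRingEnd ℂ (Q n) = Q n := by
    have h1 : Q n = ∏ i, d i := by
      show (∏ i ∈ Finset.range n, d' i) = ∏ i, d i
      rw [← Fin.prod_univ_eq_prod_range]
      exact Finset.prod_congr rfl fun i _ => by simp [hd']
    rcases hdet with h | h <;> rw [h1, h] <;> simp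
  set f' : ℕ → ℕ := fun j => if Even j then (if j + 1 < n then j + 1 else j) else j - 1 with hf'
  set g' : ℕ → ℕ := fun j => if j = 0 then 0 else
    if Even j then j - 1 else (if j + 1 < n then j + 1 else j) with hg'
  set c' : ℕ → ℂ := fun j => if Even j then Q (j + 1) else starRingEnd ℂ (Q j) with hc'
  set e' : ℕ → ℂ := fun j => if Even j then starRingEnd ℂ (Q j) else Q (j + 1) with he'
  have hflt : ∀ j, j < n → f' j < n := by
    intro j hj
    by_cases hev : Even j
    · by_cases h1 : j + 1 < n <;> simp [hf', hev, h1, hj]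
    · simp only [hf', if_neg hev]
      exact lt_of_le_of_lt (Nat.sub_le j 1) hj
  have hglt : ∀ j, j < n → g' j < n := by
    intro j hj
    rcases eq_or_ne j 0 with h0 | h0
    · simpa [hg', h0] using hj
    by_cases hev : Even j
    · simp only [hg', if_neg h0, if_pos hev]
      exact lt_of_le_of_lt (Nat.sub_le j 1) hj
    · by_cases h1 : j + 1 < n <;> simp [hg', h0, hev, h1, hj]
  have hfinv : ∀ j, j < n → f' (f' j) = j := by
    intro j hj
    by_cases hev : Even j
    · by_cases h1 : j + 1 < n
      · have h2 : ¬ Even (j + 1) := by simp [Nat.even_add_one, hev]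
        simp [hf', hev, h1, h2]
      · simp [hf', hev, h1]
    · obtain ⟨k, hk⟩ := Nat.odd_iff.mpr (Nat.not_even_iff.mp hev)
      have h1 : Even (j - 1) := ⟨k, by omega⟩
      have h2 : j - 1 + 1 = j := by omega
      simp [hf', hev, h1, h2, hj]
  have hginv : ∀ j, j < n → g' (g' j) = j := by
    intro j hj
    rcases eq_or_ne j 0 with h0 | h0
    · simp [hg', h0]
    by_cases hev : Even j
    · obtain ⟨k, hk⟩ := id hev
      have h1 : ¬ Even (j - 1) := by
        rw [Nat.not_even_iff]; omega
      have h2 : j - 1 ≠ 0 ∨ True := Or.inr trivial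
      have h3 : j - 1 + 1 = j := by omega
      have h4 : j - 1 + 1 < n := by omega
      have h5 : j - 1 ≠ 0 := by
        intro hc
        rw [Nat.not_even_iff] at h1; omega
      simp [hg', h0, hev, h1, h3, h4, h5, hj]
    · by_cases h1 : j + 1 < n
      · have h2 : Even (j + 1) := by
          obtain ⟨k, hk⟩ := Nat.odd_iff.mpr (Nat.not_even_iff.mp hev)
          exact ⟨k + 1, by omega⟩
        have h3 : j + 1 ≠ 0 := by omega
        simp [hg', h0, hev, h1, h2, h3]
      · simp [hg', h0, hev, h1]
  have hcf : ∀ j, j < n → c' (f' j) = starRingEnd ℂ (c' j) := by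
    intro j hj
    by_cases hev : Even j
    · by_cases h1 : j + 1 < n
      · have h2 : ¬ Even (j + 1) := by simp [Nat.even_add_one, hev]
        simp [hf', hc', hev, h1, h2]
      · have h2 : j + 1 = n := by omega
        have hfj : f' j = j := by simp [hf', hev, h1]
        have hcj : c' j = Q n := by simp [hc', hev, h2]
        rw [hfj, hcj, hQn]
    · obtain ⟨k, hk⟩ := Nat.odd_iff.mpr (Nat.not_even_iff.mp hev)
      have h1 : Even (j - 1) := ⟨k, by omega⟩
      have h2 : j - 1 + 1 = j := by omega
      simp [hf', hc', hev, h1, h2]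
  have heg : ∀ j, j < n → e' (g' j) = starRingEnd ℂ (e' j) := by
    intro j hj
    rcases eq_or_ne j 0 with h0 | h0
    · simp [hg', he', h0, hQ]
    by_cases hev : Even j
    · obtain ⟨k, hk⟩ := id hev
      have h1 : ¬ Even (j - 1) := by rw [Nat.not_even_iff]; omega
      have h3 : j - 1 + 1 = j := by omega
      simp [hg', he', h0, hev, h1, h3]
    · by_cases h1 : j + 1 < n
      · have h2 : Even (j + 1) := by
          obtain ⟨k, hk⟩ := Nat.odd_iff.mpr (Nat.not_even_iff.mp hev)
          exact ⟨k + 1, by omega⟩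
        simp [hg', he', h0, hev, h1, h2]
      · have h2 : j + 1 = n := by omega
        have hgj : g' j = j := by simp [hg', h0, hev, h1]
        have hej : e' j = Q n := by simp [he', hev, h2]
        rw [hgj, hej, hQn]
  have hcu : ∀ j, starRingEnd ℂ (c' j) * c' j = 1 := by
    intro j
    by_cases hev : Even j <;> simp only [hc', if_pos, if_neg, hev, if_true, if_false]
    · exact hQu _
    · rw [Complex.conj_conj, mul_comm]; exact hQu _
  have heu : ∀ j, starRingEnd ℂ (e' j) * e' j = 1 := by
    intro j
    by_cases hev : Even j <;> simp only [he', if_pos, if_neg, hev, if_true, if_false]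
    · rw [Complex.conj_conj, mul_comm]; exact hQu _
    · exact hQu _
  have hce : ∀ j, c' j * e' j = d' j := by
    intro j
    by_cases hev : Even j <;>
      simp only [hc', he', if_pos, if_neg, hev, if_true, if_false] <;> rw [hQs]
    · calc Q j * d' j * starRingEnd ℂ (Q j)
          = d' j * (starRingEnd ℂ (Q j) * Q j) := by ring
        _ = d' j := by rw [hQu, mul_one]
    · calc starRingEnd ℂ (Q j) * (Q j * d' j)
          = d' j * (starRingEnd ℂ (Q j) * Q j) := by ring
        _ = d' j := by rw [hQu, mul_one]
  refine ⟨fun i => ⟨f' i.1, hflt _ i.2⟩, fun i => ⟨g' i.1, hglt _ i.2⟩,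
    fun i => c' i.1, fun i => e' i.1, ?_, ?_, ?_, ?_, ?_, ?_, ?_⟩
  · intro j; exact Fin.ext (hfinv _ j.2)
  · intro j; exact Fin.ext (hginv _ j.2)
  · intro j; exact hcf _ j.2
  · intro j; exact heg _ j.2
  · intro j; exact hcu _
  · intro j; exact heu _
  · intro j
    rw [hce]
    simp [hd', j.2]

theorem exists_eigenbasis {E : Type*} [NormedAddCommGroup E] [InnerProductSpace ℂ E]
    [FiniteDimensional ℂ E] {N : ℕ} (hN : Module.finrank ℂ E = N)
    (T : Module.End ℂ E) (hTi : ∀ x y : E, (inner ℂ (T x) (T y) : ℂ) = inner ℂ x y) :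
    ∃ (b : OrthonormalBasis (Fin N) ℂ E) (μ : Fin N → ℂ), ∀ i, T (b i) = μ i • b i := by
  classical
  have horth : OrthogonalFamily ℂ (fun μ : ℂ => ↥(Module.End.eigenspace T μ))
      fun μ => (Module.End.eigenspace T μ).subtypeₗᵢ := by
    rintro μ ν hμν ⟨v, hv⟩ ⟨w, hw⟩
    show (inner ℂ v w : ℂ) = 0
    by_cases hvw : (inner ℂ v w : ℂ) = 0
    · exact hvw
    · exfalso
      rw [Module.End.mem_eigenspace_iff] at hv hw
      have h1 : (inner ℂ v w : ℂ) = (starRingEnd ℂ μ * ν) * inner ℂ v w := by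
        conv_lhs => rw [← hTi v w]
        rw [hv, hw, inner_smul_left, inner_smul_right]; ring
      have hμν1 : starRingEnd ℂ μ * ν = 1 :=
        mul_right_cancel₀ hvw (by rw [← h1, one_mul])
      have hv0 : v ≠ 0 := by rintro rfl; exact hvw (inner_zero_left _)
      have h2 : (inner ℂ v v : ℂ) = (starRingEnd ℂ μ * μ) * inner ℂ v v := by
        conv_lhs => rw [← hTi v v]
        rw [hv, inner_smul_left, inner_smul_right]; ring
      have hμ1 : starRingEnd ℂ μ * μ = 1 :=
        mul_right_cancel₀ (inner_self_ne_zero.mpr hv0) (by rw [← h2, one_mul])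
      have hne : starRingEnd ℂ μ ≠ 0 := fun h => by
        rw [h, zero_mul] at hμ1; exact zero_ne_one hμ1
      exact hμν (mul_left_cancel₀ hne (hμ1.trans hμν1.symm))
  have horth' : OrthogonalFamily ℂ
      (fun μ : T.Eigenvalues => ↥(Module.End.eigenspace T μ))
      fun μ => (Module.End.eigenspace T μ).subtypeₗᵢ :=
    horth.comp Subtype.coe_injective
  have hinj : Function.Injective T := by
    rw [← LinearMap.ker_eq_bot, Submodule.eq_bot_iff]
    intro x hx
    rw [LinearMap.mem_ker] at hx
    have h := hTi x x
    rw [hx, inner_zero_left] at h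
    exact inner_self_eq_zero.mp h.symm
  set W : Submodule ℂ E := ⨆ μ : ℂ, Module.End.eigenspace T μ with hW
  have hmaple : Submodule.map T W ≤ W := by
    rw [hW, Submodule.map_iSup]
    refine iSup_mono fun μ => ?_
    rintro x ⟨y, hy, rfl⟩
    simp only [SetLike.mem_coe] at hy
    have hy' : T y = μ • y := Module.End.mem_eigenspace_iff.mp hy
    simp [Module.End.mem_eigenspace_iff, _root_.map_smul, hy']
  have hmap : Submodule.map T W = W := by
    apply Submodule.eq_of_le_of_finrank_le hmaple
    exact le_of_eq (LinearEquiv.finrank_eq (Submodule.equivMapOfInjective T hinj W))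
  have hWperp : ∀ v ∈ Wᗮ, T v ∈ Wᗮ := by
    intro v hv
    rw [Submodule.mem_orthogonal] at hv ⊢
    intro u hu
    rw [← hmap] at hu
    obtain ⟨u', hu', rfl⟩ := hu
    rw [hTi u' v]
    exact hv u' hu'
  have hbot : Wᗮ = ⊥ := by
    by_contra h
    haveI : Nontrivial Wᗮ := Submodule.nontrivial_iff_ne_bot.mpr h
    obtain ⟨μ, hμ⟩ := Module.End.exists_eigenvalue (T.restrict hWperp)
    obtain ⟨v, hv⟩ := hμ.exists_hasEigenvector
    have hvmem : (v : E) ∈ Module.End.eigenspace T μ := by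
      rw [Module.End.mem_eigenspace_iff]
      have h1 := hv.apply_eq_smul
      have h2 := congrArg Subtype.val h1
      rwa [LinearMap.restrict_coe_apply] at h2
    have hvW : (v : E) ∈ W :=
      le_iSup (fun μ : ℂ => Module.End.eigenspace T μ) μ hvmem
    have hv0 : (v : E) = 0 :=
      (Submodule.orthogonal_disjoint W).le_bot ⟨hvW, v.2⟩
    exact hv.2 (Subtype.ext hv0)
  have hsup' : (⨆ μ : T.Eigenvalues, Module.End.eigenspace T μ)ᗮ = ⊥ :=
    show (⨆ μ : { μ : ℂ // Module.End.eigenspace T μ ≠ ⊥ },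
        Module.End.eigenspace T μ)ᗮ = ⊥ by
      rw [iSup_ne_bot_subtype, ← hW, hbot]
  have hint : DirectSum.IsInternal
      (fun μ : T.Eigenvalues => Module.End.eigenspace T μ) :=
    horth'.isInternal_iff.mpr hsup'
  refine ⟨hint.subordinateOrthonormalBasis hN horth',
    fun i => (hint.subordinateOrthonormalBasisIndex hN i horth').val, fun i => ?_⟩
  exact Module.End.mem_eigenspace_iff.mp
    (hint.subordinateOrthonormalBasis_subordinate hN i horth')

theorem exists_unitary_diag {N : ℕ} (U : Matrix (Fin N) (Fin N) ℂ)
    (hU : U ∈ unitary (Matrix (Fin N) (Fin N) ℂ)) :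
    ∃ (V : Matrix (Fin N) (Fin N) ℂ) (μ : Fin N → ℂ),
      V ∈ unitary (Matrix (Fin N) (Fin N) ℂ) ∧
      (∀ i, starRingEnd ℂ (μ i) * μ i = 1) ∧
      U = V * Matrix.diagonal μ * Vᴴ := by
  classical
  have hU1 : Uᴴ * U = 1 := by rw [← Matrix.star_eq_conjTranspose]; exact hU.1
  have hTi : ∀ x y : EuclideanSpace ℂ (Fin N),
      (inner ℂ (Matrix.toEuclideanLin U x) (Matrix.toEuclideanLin U y) : ℂ) = inner ℂ x y := by
    intro x y
    rw [EuclideanSpace.inner_eq_star_dotProduct, EuclideanSpace.inner_eq_star_dotProduct]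
    simp only [Matrix.ofLp_toEuclideanLin_apply]
    rw [dotProduct_comm (U *ᵥ _), dotProduct_comm (WithLp.ofLp y), Matrix.star_mulVec, Matrix.dotProduct_mulVec, Matrix.vecMul_vecMul, hU1,
      Matrix.vecMul_one]
  obtain ⟨b, μ, hbμ⟩ := exists_eigenbasis finrank_euclideanSpace_fin
    (Matrix.toEuclideanLin U) hTi
  have hmulvec : ∀ i, U *ᵥ ⇑(b i) = μ i • ⇑(b i) := by
    intro i
    have h1 := congrArg (⇑(WithLp.equiv 2 (Fin N → ℂ))) (hbμ i)
    simpa [Matrix.ofLp_toEuclideanLin_apply] using h1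
  set V : Matrix (Fin N) (Fin N) ℂ :=
    (EuclideanSpace.basisFun (Fin N) ℂ).toBasis.toMatrix b.toBasis with hVdef
  have hVmem : V ∈ unitary (Matrix (Fin N) (Fin N) ℂ) :=
    (EuclideanSpace.basisFun (Fin N) ℂ).toMatrix_orthonormalBasis_mem_unitary b
  have hVsingle : ∀ j, V *ᵥ Pi.single j 1 = ⇑(b j) := by
    intro j
    have hcol : ∀ i, V i j = b j i := fun i => rfl
    funext i
    rw [Matrix.mulVec_single]
    simp [hcol]
  have hVstar : ∀ j, (star V) *ᵥ ⇑(b j) = Pi.single j 1 := by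
    intro j
    rw [← hVsingle, Matrix.mulVec_mulVec, hVmem.1, Matrix.one_mulVec]
  have key : Vᴴ * U * V = Matrix.diagonal μ := by
    apply Matrix.toEuclideanLin.injective
    apply Basis.ext (EuclideanSpace.basisFun (Fin N) ℂ).toBasis
    intro i
    simp only [Matrix.toEuclideanLin_apply, OrthonormalBasis.coe_toBasis,
      EuclideanSpace.basisFun_apply, PiLp.ofLp_single, ← Matrix.mulVec_mulVec,
      hVsingle, hmulvec, Matrix.mulVec_smul, ← Matrix.star_eq_conjTranspose, hVstar,
      Matrix.diagonal_mulVec_single, PiLp.ofLp_single,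
      mul_one]
    apply PiLp.ext
    intro j
    simp only [PiLp.smul_apply, EuclideanSpace.single_apply, Pi.smul_apply, Pi.single_apply, smul_eq_mul, mul_ite, mul_one,
      mul_zero]

  have hVV : V * Vᴴ = 1 := by rw [← Matrix.star_eq_conjTranspose]; exact hVmem.2
  refine ⟨V, μ, hVmem, ?_, ?_⟩
  · intro i
    have hDmem : Matrix.diagonal μ ∈ unitary (Matrix (Fin N) (Fin N) ℂ) := by
      rw [← key]
      exact mul_mem (mul_mem (Unitary.star_mem hVmem) hU) hVmem
    have h1 : (Matrix.diagonal μ)ᴴ * Matrix.diagonal μ = 1 := by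
      rw [← Matrix.star_eq_conjTranspose]; exact hDmem.1
    have h2 := congrFun (congrFun h1 i) i
    simpa [Matrix.diagonal_conjTranspose, Matrix.diagonal_mul_diagonal,
      Matrix.diagonal_apply_eq, Matrix.one_apply_eq] using h2
  · rw [← key]
    calc U = (V * Vᴴ) * U * (V * Vᴴ) := by rw [hVV, one_mul, mul_one]
      _ = V * (Vᴴ * U * V) * Vᴴ := by simp only [Matrix.mul_assoc]



end Radjavi

open Radjavi in
theorem stmt9 {n : ℕ} (U : Matrix (Fin n) (Fin n) ℂ)
    (hU : U ∈ unitary (Matrix (Fin n) (Fin n) ℂ))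
    (hdet : U.det = 1 ∨ U.det = -1) :
    ∃ R1 R2 R3 R4 : Matrix (Fin n) (Fin n) ℂ,
      (R1 ∈ unitary (Matrix (Fin n) (Fin n) ℂ) ∧ IsSelfAdjoint R1) ∧
      (R2 ∈ unitary (Matrix (Fin n) (Fin n) ℂ) ∧ IsSelfAdjoint R2) ∧
      (R3 ∈ unitary (Matrix (Fin n) (Fin n) ℂ) ∧ IsSelfAdjoint R3) ∧
      (R4 ∈ unitary (Matrix (Fin n) (Fin n) ℂ) ∧ IsSelfAdjoint R4) ∧
      U = R1 * R2 * R3 * R4 := by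
  classical
  obtain ⟨V, μ, hV, hμu, hUeq⟩ := exists_unitary_diag U hU
  have hVV : V * Vᴴ = 1 := by rw [← Matrix.star_eq_conjTranspose]; exact hV.2
  have hVV' : Vᴴ * V = 1 := by rw [← Matrix.star_eq_conjTranspose]; exact hV.1
  -- determinant of the diagonal part
  have hdetD : (∏ i, μ i) = 1 ∨ (∏ i, μ i) = -1 := by
    have h1 : U.det = ∏ i, μ i := by
      rw [hUeq, Matrix.det_mul, Matrix.det_mul]
      calc V.det * (Matrix.diagonal μ).det * Vᴴ.det
          = (Matrix.diagonal μ).det * (V.det * Vᴴ.det) := by ring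
        _ = (Matrix.diagonal μ).det * (V * Vᴴ).det := by rw [Matrix.det_mul]
        _ = ∏ i, μ i := by rw [hVV, Matrix.det_one, mul_one, Matrix.det_diagonal]
    rwa [h1] at hdet
  obtain ⟨f, g, c, e, hfinv, hginv, hcf, heg, hcu, heu, hce⟩ := exists_split μ hμu hdetD
  obtain ⟨hceq, hS1, hS2⟩ := diagonal_eq_two_symm f hfinv c hcf hcu
  obtain ⟨heeq, hS3, hS4⟩ := diagonal_eq_two_symm g hginv e heg heu
  set S1 := S f (fun _ => (1:ℂ))
  set S2 := S f (fun j => c (f j))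
  set S3 := S g (fun _ => (1:ℂ))
  set S4 := S g (fun j => e (g j))
  have hdiagμ : Matrix.diagonal μ = S1 * S2 * (S3 * S4) := by
    rw [← hceq, ← heeq, Matrix.diagonal_mul_diagonal]
    exact congrArg Matrix.diagonal (funext fun j => (hce j).symm)
  have hconj_mem : ∀ (A : Matrix (Fin n) (Fin n) ℂ),
      A ∈ unitary (Matrix (Fin n) (Fin n) ℂ) → IsSelfAdjoint A →
      (V * A * Vᴴ ∈ unitary (Matrix (Fin n) (Fin n) ℂ) ∧ IsSelfAdjoint (V * A * Vᴴ)) := by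
    intro A hA hAsa
    constructor
    · have : V * A * Vᴴ = V * A * star V := by rw [Matrix.star_eq_conjTranspose]
      rw [this]
      exact mul_mem (mul_mem hV hA) (Unitary.star_mem hV)
    · show (V * A * Vᴴ)ᴴ = V * A * Vᴴ
      rw [Matrix.conjTranspose_mul, Matrix.conjTranspose_mul,
        Matrix.conjTranspose_conjTranspose]
      have hA' : Aᴴ = A := hAsa
      rw [hA', Matrix.mul_assoc]
  have hcanc : ∀ X : Matrix (Fin n) (Fin n) ℂ, Vᴴ * (V * X) = X := by
    intro X
    rw [← Matrix.mul_assoc, hVV', one_mul]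
  have hconj_mul : ∀ A B : Matrix (Fin n) (Fin n) ℂ,
      (V * A * Vᴴ) * (V * B * Vᴴ) = V * (A * B) * Vᴴ := by
    intro A B
    calc (V * A * Vᴴ) * (V * B * Vᴴ) = V * (A * (Vᴴ * (V * (B * Vᴴ)))) := by
          simp only [Matrix.mul_assoc]
      _ = V * (A * (B * Vᴴ)) := by rw [hcanc]
      _ = V * (A * B) * Vᴴ := by simp only [Matrix.mul_assoc]
  refine ⟨V * S1 * Vᴴ, V * S2 * Vᴴ, V * S3 * Vᴴ, V * S4 * Vᴴ,
    hconj_mem S1 hS1.1 hS1.2, hconj_mem S2 hS2.1 hS2.2,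
    hconj_mem S3 hS3.1 hS3.2, hconj_mem S4 hS4.1 hS4.2, ?_⟩
  rw [hconj_mul S1 S2, hconj_mul (S1 * S2) S3, hconj_mul (S1 * S2 * S3) S4,
    Matrix.mul_assoc (S1 * S2) S3 S4, ← hdiagμ]
  exact hUeq
end

section
/- Let A be a unital C*-algebra. If ξ ∈ ℂ with |ξ| = 1 and ξ·1 is a product of three self-adjoint unitaries in A, then ξ^4 = 1. -/
theorem stmt10 {A : Type*} [NormedRing A] [StarRing A] [CStarRing A]
    [NormedAlgebra ℂ A] [StarModule ℂ A] [CompleteSpace A] [Nontrivial A]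
    (ξ : ℂ) (hξ : ‖ξ‖ = 1)
    (R1 R2 R3 : A)
    (h1 : R1 ∈ unitary A ∧ IsSelfAdjoint R1)
    (h2 : R2 ∈ unitary A ∧ IsSelfAdjoint R2)
    (h3 : R3 ∈ unitary A ∧ IsSelfAdjoint R3)
    (h : ξ • (1 : A) = R1 * R2 * R3) :
    ξ ^ 4 = 1 := by
  obtain ⟨hu1, hs1⟩ := h1
  obtain ⟨hu2, hs2⟩ := h2
  obtain ⟨hu3, hs3⟩ := h3
  have hR1sq : R1 * R1 = 1 := by
    have := hu1.1; rwa [hs1.star_eq] at this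
  have hR3sq : R3 * R3 = 1 := by
    have := hu3.1; rwa [hs3.star_eq] at this
  set u : A := R1 * R2 with hu
  -- ξ • R3 = u
  have key : ξ • R3 = u := by
    have := congrArg (· * R3) h
    simp only [smul_mul_assoc, one_mul] at this
    rw [this, hu, mul_assoc (R1 * R2), hR3sq, mul_one]
  -- star u is unitarily conjugate to u
  have hconj : R1 * u * star R1 = star u := by
    rw [hs1.star_eq, hu, star_mul, hs1.star_eq, hs2.star_eq, ← mul_assoc, hR1sq, one_mul]
  have hspec_star : spectrum ℂ (star u) = spectrum ℂ u := by
    rw [← hconj]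
    exact Unitary.spectrum_star_right_conjugate (U := ⟨R1, hu1⟩)
  -- spectrum of R3 is in {1, -1}
  have hR3spec : spectrum ℂ R3 ⊆ {1, -1} := by
    intro l hl
    have h2' : l ^ 2 ∈ spectrum ℂ (R3 ^ 2) :=
      spectrum.pow_image_subset R3 2 ⟨l, hl, rfl⟩
    rw [sq, hR3sq, spectrum.one_eq] at h2'
    have hl2 : l ^ 2 = 1 := h2'
    have hfac : (l - 1) * (l + 1) = 0 := by linear_combination hl2
    rcases mul_eq_zero.mp hfac with h' | h'
    · left; exact sub_eq_zero.mp h'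
    · right; exact eq_neg_of_add_eq_zero_left h'
  -- spectrum of u
  have husubset : spectrum ℂ u ⊆ {ξ, -ξ} := by
    rw [← key, spectrum.smul_eq_smul ξ R3 (spectrum.nonempty R3)]
    rintro x ⟨m, hm, rfl⟩
    rcases hR3spec hm with rfl | rfl
    · left; simp
    · right; simp
  obtain ⟨l, hl⟩ := spectrum.nonempty u
  have hl' : star l ∈ spectrum ℂ u := by
    rw [← hspec_star, spectrum.map_star]
    exact Set.star_mem_star.mpr (by simpa using hl)
  have hmul : ξ * star ξ = 1 := by
    rw [RCLike.star_def, Complex.mul_conj]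
    norm_cast
    rw [Complex.normSq_eq_norm_sq, hξ]; norm_num
  have hcase : star ξ = ξ ∨ star ξ = -ξ := by
    have H1 := husubset hl
    have H2 := husubset hl'
    simp only [Set.mem_insert_iff, Set.mem_singleton_iff] at H1 H2
    rcases H1 with rfl | rfl <;> rcases H2 with h' | h'
    · exact Or.inl h'
    · exact Or.inr h'
    · simp only [star_neg] at h'
      exact Or.inr (by linear_combination -h')
    · simp only [star_neg] at h'
      exact Or.inl (by linear_combination -h')
  rcases hcase with h' | h'
  · linear_combination (ξ ^ 2 + 1) * hmul - (ξ ^ 2 + 1) * ξ * h'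
  · linear_combination (1 - ξ ^ 2) * hmul + (ξ ^ 2 - 1) * ξ * h'
end

section
/- For every positive integer n and every complex number ξ with ξ^n = 1, there exist four self-adjoint unitary matrices R1, R2, R3, R4 in M_{2n}(ℂ) with R1 R2 R3 R4 = ξ · I. -/
open Matrix

theorem stmt12 {n : ℕ} (hn : 0 < n) (ξ : ℂ) (hξ : ξ ^ n = 1) :
    ∃ R1 R2 R3 R4 : Matrix (Fin (2 * n)) (Fin (2 * n)) ℂ,
      (R1 ∈ unitary (Matrix (Fin (2 * n)) (Fin (2 * n)) ℂ) ∧ IsSelfAdjoint R1) ∧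
      (R2 ∈ unitary (Matrix (Fin (2 * n)) (Fin (2 * n)) ℂ) ∧ IsSelfAdjoint R2) ∧
      (R3 ∈ unitary (Matrix (Fin (2 * n)) (Fin (2 * n)) ℂ) ∧ IsSelfAdjoint R3) ∧
      (R4 ∈ unitary (Matrix (Fin (2 * n)) (Fin (2 * n)) ℂ) ∧ IsSelfAdjoint R4) ∧
      R1 * R2 * R3 * R4 = ξ • (1 : Matrix (Fin (2 * n)) (Fin (2 * n)) ℂ) := by
  haveI : NeZero n := ⟨hn.ne'⟩
  -- scalar facts
  have habs : ‖ξ‖ = 1 := by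
    have h1 : ‖ξ‖ ^ n = 1 := by
      rw [← norm_pow, hξ, norm_one]
    rcases (pow_eq_one_iff_cases.mp h1) with h | h | h
    · exact absurd h hn.ne'
    · exact h
    · exfalso; nlinarith [norm_nonneg ξ, h.1]
  have hconj : (starRingEnd ℂ) ξ * ξ = 1 := by
    have := Complex.mul_conj ξ
    rw [Complex.normSq_eq_norm_sq, habs] at this
    rw [mul_comm, this]; norm_num
  have hpow : ∀ a : ℕ, ξ ^ (a % n) = ξ ^ a := by
    intro a
    conv_rhs => rw [← Nat.div_add_mod a n]
    rw [pow_add, pow_mul, hξ, one_pow, one_mul]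
  -- the Weyl matrices
  set D : Matrix (Fin n) (Fin n) ℂ := Matrix.diagonal (fun j => ξ ^ (j : ℕ)) with hD
  set P : Matrix (Fin n) (Fin n) ℂ := fun i j => if i = j + 1 then 1 else 0 with hP
  have hPH : Pᴴ = fun i j => if j = i + 1 then 1 else 0 := by
    ext i j; simp only [Matrix.conjTranspose_apply]; simp [hP]
  have hiff : ∀ a k : Fin n, (a = k + 1) ↔ (k = a - 1) := by
    intro a k
    constructor <;> intro h <;> simp [h]
  -- P is unitary
  have hP1 : Pᴴ * P = 1 := by
    ext i j
    rw [Matrix.mul_apply, hPH]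
    simp only [Matrix.mul_apply, hPH, hP, Matrix.one_apply, ite_mul, one_mul, zero_mul]
    rw [Finset.sum_ite_eq']
    simp [eq_comm]
  have hP2 : P * Pᴴ = 1 := by
    ext i j
    rw [Matrix.mul_apply, hPH]
    simp only [Matrix.mul_apply, hPH, hP, Matrix.one_apply]
    simp only [hiff, ite_mul, one_mul, zero_mul]
    rw [Finset.sum_ite_eq']
    simp [sub_left_inj, eq_comm]
  -- D is unitary
  have hDH : Dᴴ = Matrix.diagonal (fun j : Fin n => (starRingEnd ℂ) (ξ ^ (j : ℕ))) := by
    rw [hD, Matrix.diagonal_conjTranspose]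
    rfl
  have hD1 : Dᴴ * D = 1 := by
    rw [hDH, hD, Matrix.diagonal_mul_diagonal]
    convert Matrix.diagonal_one using 2
    funext x
    rw [map_pow, ← mul_pow, hconj, one_pow]
  have hD2 : D * Dᴴ = 1 := by
    rw [hDH, hD, Matrix.diagonal_mul_diagonal]
    convert Matrix.diagonal_one using 2
    funext x
    rw [map_pow, ← mul_pow, mul_comm, hconj, one_pow]
  -- commutation relations
  have hval : ∀ j : Fin n, ((j + 1 : Fin n) : ℕ) = (j + 1) % n := by
    intro j; simp [Fin.add_def]
  have hrel1 : P * Dᴴ = ξ • (Dᴴ * P) := by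
    rw [hDH]
    ext i j
    rw [Matrix.mul_diagonal, Matrix.smul_apply, Matrix.diagonal_mul]
    by_cases h : i = j + 1
    · simp only [hP, h, if_pos rfl, mul_one, one_mul, smul_eq_mul]
      rw [hval, hpow, map_pow, map_pow, pow_succ]
      linear_combination (-((starRingEnd ℂ) ξ ^ (j : ℕ))) * hconj
    · simp [hP, h]
  have hrel2 : Pᴴ * D = ξ • (D * Pᴴ) := by
    rw [hD]
    ext i j
    rw [Matrix.mul_diagonal, Matrix.smul_apply, Matrix.diagonal_mul]
    simp only [Matrix.conjTranspose_apply]; simp only [hP]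
    by_cases h : j = i + 1
    · simp only [h, if_pos rfl, _root_.map_one, mul_one, one_mul, smul_eq_mul]
      rw [hval, hpow, pow_succ]
      ring
    · simp [h]
  -- block symmetries
  set S : Matrix (Fin n) (Fin n) ℂ → Matrix (Fin n ⊕ Fin n) (Fin n ⊕ Fin n) ℂ :=
    fun W => Matrix.fromBlocks 0 W Wᴴ 0 with hS
  have hSsa : ∀ W, IsSelfAdjoint (S W) := by
    intro W
    show (Matrix.fromBlocks 0 W Wᴴ 0)ᴴ = _
    rw [Matrix.fromBlocks_conjTranspose]
    simp [hS]
  have hSU : ∀ W, Wᴴ * W = 1 → W * Wᴴ = 1 → S W ∈ unitary _ := by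
    intro W h1 h2
    constructor
    · show (Matrix.fromBlocks 0 W Wᴴ 0)ᴴ * (Matrix.fromBlocks 0 W Wᴴ 0) = 1
      rw [Matrix.fromBlocks_conjTranspose, Matrix.fromBlocks_multiply]
      simp [h1, h2, Matrix.fromBlocks_one]
    · show (Matrix.fromBlocks 0 W Wᴴ 0) * (Matrix.fromBlocks 0 W Wᴴ 0)ᴴ = 1
      rw [Matrix.fromBlocks_conjTranspose, Matrix.fromBlocks_multiply]
      simp [h1, h2, Matrix.fromBlocks_one]
  -- the product of four symmetries
  have htop : D * P * Dᴴ * Pᴴ = ξ • 1 := by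
    calc D * P * Dᴴ * Pᴴ = D * (P * Dᴴ) * Pᴴ := by noncomm_ring
      _ = D * (ξ • (Dᴴ * P)) * Pᴴ := by rw [hrel1]
      _ = ξ • (D * Dᴴ * (P * Pᴴ)) := by
          rw [mul_smul_comm, smul_mul_assoc]; congr 1; noncomm_ring
      _ = ξ • 1 := by rw [hD2, hP2, Matrix.one_mul]
  have hbot : Dᴴ * Pᴴ * D * P = ξ • 1 := by
    calc Dᴴ * Pᴴ * D * P = Dᴴ * (Pᴴ * D) * P := by noncomm_ring
      _ = Dᴴ * (ξ • (D * Pᴴ)) * P := by rw [hrel2]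
      _ = ξ • (Dᴴ * D * (Pᴴ * P)) := by
          rw [mul_smul_comm, smul_mul_assoc]; congr 1; noncomm_ring
      _ = ξ • 1 := by rw [hD1, hP1, Matrix.one_mul]
  have hprod : S D * S Pᴴ * S Dᴴ * S P = ξ • 1 := by
    show Matrix.fromBlocks 0 D Dᴴ 0 * Matrix.fromBlocks 0 Pᴴ (Pᴴ)ᴴ 0 *
        Matrix.fromBlocks 0 Dᴴ (Dᴴ)ᴴ 0 * Matrix.fromBlocks 0 P Pᴴ 0 = _
    rw [Matrix.conjTranspose_conjTranspose, Matrix.conjTranspose_conjTranspose]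
    rw [Matrix.fromBlocks_multiply, Matrix.fromBlocks_multiply, Matrix.fromBlocks_multiply]
    simp only [Matrix.mul_zero, Matrix.zero_mul, add_zero, zero_add, Matrix.mul_one]
    rw [htop, hbot, ← Matrix.fromBlocks_one, Matrix.fromBlocks_smul, smul_zero]
  -- transport to Fin (2 * n)
  let e : Fin (2 * n) ≃ (Fin n ⊕ Fin n) :=
    (finCongr (two_mul n)).trans finSumFinEquiv.symm
  let T : Matrix (Fin n ⊕ Fin n) (Fin n ⊕ Fin n) ℂ → Matrix (Fin (2 * n)) (Fin (2 * n)) ℂ :=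
    fun M => M.submatrix e e
  have hTmul : ∀ A B, T A * T B = T (A * B) := by
    intro A B; exact Matrix.submatrix_mul_equiv A B e e e
  have hTsa : ∀ A, IsSelfAdjoint A → IsSelfAdjoint (T A) := by
    intro A hA
    show (A.submatrix e e)ᴴ = A.submatrix e e
    rw [Matrix.conjTranspose_submatrix, show Aᴴ = A from hA]
  have hTone : T 1 = 1 := Matrix.submatrix_one_equiv e
  have hTunit : ∀ A, A ∈ unitary (Matrix (Fin n ⊕ Fin n) (Fin n ⊕ Fin n) ℂ) →
      T A ∈ unitary (Matrix (Fin (2 * n)) (Fin (2 * n)) ℂ) := by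
    intro A ⟨h1, h2⟩
    constructor
    · show (A.submatrix e e)ᴴ * A.submatrix e e = 1
      rw [Matrix.conjTranspose_submatrix]
      rw [Matrix.submatrix_mul_equiv]
      rw [show Aᴴ * A = (1 : Matrix (Fin n ⊕ Fin n) (Fin n ⊕ Fin n) ℂ) from h1]
      exact Matrix.submatrix_one_equiv e
    · show A.submatrix e e * (A.submatrix e e)ᴴ = 1
      rw [Matrix.conjTranspose_submatrix]
      rw [Matrix.submatrix_mul_equiv]
      rw [show A * Aᴴ = (1 : Matrix (Fin n ⊕ Fin n) (Fin n ⊕ Fin n) ℂ) from h2]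
      exact Matrix.submatrix_one_equiv e
  refine ⟨T (S D), T (S Pᴴ), T (S Dᴴ), T (S P),
    ⟨hTunit _ (hSU D hD1 hD2), hTsa _ (hSsa D)⟩,
    ⟨hTunit _ (hSU Pᴴ (by rwa [Matrix.conjTranspose_conjTranspose]) (by rwa [Matrix.conjTranspose_conjTranspose])), hTsa _ (hSsa Pᴴ)⟩,
    ⟨hTunit _ (hSU Dᴴ (by rwa [Matrix.conjTranspose_conjTranspose]) (by rwa [Matrix.conjTranspose_conjTranspose])), hTsa _ (hSsa Dᴴ)⟩,
    ⟨hTunit _ (hSU P hP1 hP2), hTsa _ (hSsa P)⟩, ?_⟩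
  rw [hTmul, hTmul, hTmul, hprod]
  show (ξ • (1 : Matrix (Fin n ⊕ Fin n) (Fin n ⊕ Fin n) ℂ)).submatrix e e = ξ • 1
  ext i j
  simp [Matrix.submatrix_apply, Matrix.smul_apply, Matrix.one_apply,
    EmbeddingLike.apply_eq_iff_eq]
end

section
/- Let H be a Hilbert space and let U be a unitary in B(H) whose spectrum is contained in one of the four open arcs of the unit circle strictly between consecutive elements of {1, i, -1, -i}. Then U is not a product of three self-adjoint unitaries in B(H). -/
/-- The open arc of the unit circle `{exp(2πiα) : (k-1)/4 < α < k/4}`. -/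
def openArc (k : ℕ) : Set ℂ :=
  {z : ℂ | ∃ α : ℝ, ((k : ℝ) - 1) / 4 < α ∧ α < (k : ℝ) / 4 ∧
    z = Complex.exp (2 * Real.pi * α * Complex.I)}

section Aux

lemma aux_expand {A : Type*} [Ring A] [Algebra ℂ A] (R : A) (hRR : R * R = 1) (c d e f : ℂ) :
    (algebraMap ℂ A c + d • R) * (algebraMap ℂ A e + f • R)
      = algebraMap ℂ A (c * e + d * f) + (c * f + d * e) • R := by
  simp only [Algebra.algebraMap_eq_smul_one, add_mul, mul_add, smul_mul_smul_comm,
    one_mul, mul_one, hRR]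
  module

variable {A : Type*} [NormedRing A] [StarRing A] [CStarRing A]
  [NormedAlgebra ℂ A] [StarModule ℂ A] [Nontrivial A]

lemma aux_norm_le (R : A) (hRu : R ∈ unitary A) (hRs : star R = R) (hRR : R * R = 1)
    (w ξ : ℂ) (hw : ‖w‖ = 1) (hξ : ‖ξ‖ = 1) :
    ‖algebraMap ℂ A w + ξ • R‖ ≤ max ‖w - ξ‖ ‖w + ξ‖ := by
  set T := algebraMap ℂ A w + ξ • R with hT
  set t : ℝ := (w * (starRingEnd ℂ) ξ).re with ht
  have hnw : Complex.normSq w = 1 := by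
    rw [Complex.normSq_eq_norm_sq, hw]; norm_num
  have hnξ : Complex.normSq ξ = 1 := by
    rw [Complex.normSq_eq_norm_sq, hξ]; norm_num
  have h1 : (starRingEnd ℂ) w * w = 1 := by
    rw [mul_comm, Complex.mul_conj, hnw]; norm_num
  have h2 : (starRingEnd ℂ) ξ * ξ = 1 := by
    rw [mul_comm, Complex.mul_conj, hnξ]; norm_num
  have h3 : (starRingEnd ℂ) w * ξ + (starRingEnd ℂ) ξ * w = ((2 * t : ℝ) : ℂ) := by
    have e1 : (starRingEnd ℂ) w * ξ = (starRingEnd ℂ) (w * (starRingEnd ℂ) ξ) := by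
      simp [mul_comm]
    rw [e1, mul_comm ((starRingEnd ℂ) ξ) w, add_comm, Complex.add_conj]
  have hstar : star T = algebraMap ℂ A ((starRingEnd ℂ) w) + ((starRingEnd ℂ) ξ) • R := by
    rw [hT, star_add, star_smul, hRs, ← algebraMap_star_comm]
    rfl
  have hmul : star T * T = algebraMap ℂ A 2 + ((2 * t : ℝ) : ℂ) • R := by
    rw [hstar, hT, aux_expand R hRR, h3]
    congr 2
    rw [h1, h2]; norm_num
  have hnorm1 : ‖star T * T‖ ≤ 2 + 2 * |t| := by
    rw [hmul]
    calc ‖algebraMap ℂ A 2 + ((2 * t : ℝ) : ℂ) • R‖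
        ≤ ‖algebraMap ℂ A (2:ℂ)‖ + ‖((2 * t : ℝ) : ℂ) • R‖ := norm_add_le _ _
      _ = 2 + 2 * |t| := by
          rw [norm_algebraMap', norm_smul, CStarRing.norm_of_mem_unitary hRu,
            Complex.norm_real, Real.norm_eq_abs, abs_mul]
          norm_num
  have hTsq : ‖T‖ ^ 2 ≤ 2 + 2 * |t| := by
    rw [pow_two, ← CStarRing.norm_star_mul_self]; exact hnorm1
  have hsub : ‖w - ξ‖ ^ 2 = 2 - 2 * t := by
    rw [Complex.sq_norm, Complex.normSq_sub, hnw, hnξ, ht]; ring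
  have hadd : ‖w + ξ‖ ^ 2 = 2 + 2 * t := by
    rw [Complex.sq_norm, Complex.normSq_add, hnw, hnξ, ht]; ring
  have hn1 := norm_nonneg (w - ξ)
  have hn2 := norm_nonneg (w + ξ)
  have hn3 := norm_nonneg T
  rcases le_total t 0 with hle | hle
  · have habs : |t| = -t := abs_of_nonpos hle
    have : ‖T‖ ≤ ‖w - ξ‖ := by nlinarith
    exact le_trans this (le_max_left _ _)
  · have habs : |t| = t := abs_of_nonneg hle
    have : ‖T‖ ≤ ‖w + ξ‖ := by nlinarith
    exact le_trans this (le_max_right _ _)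

variable [CompleteSpace A] in
lemma aux_min_le (R V : A) (hRu : R ∈ unitary A) (hRs : star R = R) (hRR : R * R = 1)
    (hVu : V ∈ unitary A) (ξ : ℂ) (hξ : ‖ξ‖ = 1) (w : ℂ) (hw : w ∈ spectrum ℂ V) :
    min ‖w - ξ‖ ‖w + ξ‖ ≤ ‖V - ξ • R‖ := by
  by_contra hcon
  push_neg at hcon
  have hwn : ‖w‖ = 1 := by simpa using spectrum.subset_circle_of_unitary hVu hw
  have ha : ‖V - ξ • R‖ < ‖w - ξ‖ := lt_of_lt_of_le hcon (min_le_left _ _)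
  have hb : ‖V - ξ • R‖ < ‖w + ξ‖ := lt_of_lt_of_le hcon (min_le_right _ _)
  have hr0 : (0:ℝ) ≤ ‖V - ξ • R‖ := norm_nonneg _
  have ha0 : 0 < ‖w - ξ‖ := lt_of_le_of_lt hr0 ha
  have hb0 : 0 < ‖w + ξ‖ := lt_of_le_of_lt hr0 hb
  have hmin0 : 0 < min ‖w - ξ‖ ‖w + ξ‖ := lt_min ha0 hb0
  have hne : w ^ 2 - ξ ^ 2 ≠ 0 := by
    have e1 : w - ξ ≠ 0 := norm_pos_iff.mp ha0
    have e2 : w + ξ ≠ 0 := norm_pos_iff.mp hb0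
    rw [show w ^ 2 - ξ ^ 2 = (w - ξ) * (w + ξ) by ring]
    exact mul_ne_zero e1 e2
  set N : A := (w ^ 2 - ξ ^ 2)⁻¹ • (algebraMap ℂ A w + ξ • R) with hNdef
  have hsubform : algebraMap ℂ A w - ξ • R = algebraMap ℂ A w + (-ξ) • R := by
    rw [neg_smul, ← sub_eq_add_neg]
  have hval : (algebraMap ℂ A w - ξ • R) * N = 1 := by
    rw [hNdef, mul_smul_comm, hsubform, aux_expand R hRR,
      show w * w + -ξ * ξ = w ^ 2 - ξ ^ 2 by ring, show w * ξ + -ξ * w = 0 by ring,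
      zero_smul, add_zero, Algebra.algebraMap_eq_smul_one, smul_smul,
      inv_mul_cancel₀ hne, one_smul]
  have hinv : N * (algebraMap ℂ A w - ξ • R) = 1 := by
    rw [hNdef, smul_mul_assoc, hsubform, aux_expand R hRR,
      show w * w + ξ * -ξ = w ^ 2 - ξ ^ 2 by ring, show w * -ξ + ξ * w = 0 by ring,
      zero_smul, add_zero, Algebra.algebraMap_eq_smul_one, smul_smul,
      inv_mul_cancel₀ hne, one_smul]
  set x : Aˣ := ⟨algebraMap ℂ A w - ξ • R, N, hval, hinv⟩ with hx
  have hNle : ‖N‖ ≤ (min ‖w - ξ‖ ‖w + ξ‖)⁻¹ := by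
    have hmax0 : 0 < max ‖w - ξ‖ ‖w + ξ‖ := lt_of_lt_of_le ha0 (le_max_left _ _)
    have h2 : ‖(w ^ 2 - ξ ^ 2)⁻¹‖ = (‖w - ξ‖ * ‖w + ξ‖)⁻¹ := by
      rw [norm_inv, show w ^ 2 - ξ ^ 2 = (w - ξ) * (w + ξ) by ring, norm_mul]
    have h3 := aux_norm_le R hRu hRs hRR w ξ hwn hξ
    calc ‖N‖ = ‖(w ^ 2 - ξ ^ 2)⁻¹‖ * ‖algebraMap ℂ A w + ξ • R‖ := by
          rw [hNdef, norm_smul]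
      _ ≤ (‖w - ξ‖ * ‖w + ξ‖)⁻¹ * max ‖w - ξ‖ ‖w + ξ‖ := by
          rw [h2]
          exact mul_le_mul_of_nonneg_left h3 (by positivity)
      _ = (min ‖w - ξ‖ ‖w + ξ‖)⁻¹ := by
          rw [← min_mul_max ‖w - ξ‖ ‖w + ξ‖, mul_inv, mul_assoc,
            inv_mul_cancel₀ hmax0.ne', mul_one]
  have hN0 : 0 < ‖N‖ := by
    have : N ≠ 0 := by
      intro h
      apply one_ne_zero (α := A)
      rw [← hinv, h, zero_mul]
    exact norm_pos_iff.mpr this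
  have hlt : ‖(algebraMap ℂ A w - V) - (x : A)‖ < ‖((x⁻¹ : Aˣ) : A)‖⁻¹ := by
    have h4 : (algebraMap ℂ A w - V) - (x : A) = -(V - ξ • R) := by
      show (algebraMap ℂ A w - V) - (algebraMap ℂ A w - ξ • R) = -(V - ξ • R)
      abel
    have hxinv : ((x⁻¹ : Aˣ) : A) = N := rfl
    rw [h4, norm_neg, hxinv]
    have h5 : ‖V - ξ • R‖ * ‖N‖ < 1 := by
      calc ‖V - ξ • R‖ * ‖N‖ ≤ ‖V - ξ • R‖ * (min ‖w - ξ‖ ‖w + ξ‖)⁻¹ :=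
            mul_le_mul_of_nonneg_left hNle hr0
        _ < min ‖w - ξ‖ ‖w + ξ‖ * (min ‖w - ξ‖ ‖w + ξ‖)⁻¹ :=
            mul_lt_mul_of_pos_right hcon (by positivity)
        _ = 1 := mul_inv_cancel₀ hmin0.ne'
    rw [← one_div]
    exact (lt_div_iff₀ hN0).mpr h5
  have hy : IsUnit (algebraMap ℂ A w - V) := by
    have hu := (Units.ofNearby x (algebraMap ℂ A w - V) hlt).isUnit
    have he : ((Units.ofNearby x (algebraMap ℂ A w - V) hlt : Aˣ) : A)
        = algebraMap ℂ A w - V := rfl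
    rwa [he] at hu
  exact spectrum.mem_iff.mp hw hy

end Aux

set_option maxHeartbeats 1000000 in
theorem stmt14 {H : Type*} [NormedAddCommGroup H] [InnerProductSpace ℂ H]
    [CompleteSpace H] [Nontrivial H]
    (U : H →L[ℂ] H) (hU : U ∈ unitary (H →L[ℂ] H))
    (k : ℕ) (hk : 1 ≤ k ∧ k ≤ 4) (hsp : spectrum ℂ U ⊆ openArc k) :
    ¬ ∃ R1 R2 R3 : H →L[ℂ] H,
      (R1 ∈ unitary (H →L[ℂ] H) ∧ IsSelfAdjoint R1) ∧
      (R2 ∈ unitary (H →L[ℂ] H) ∧ IsSelfAdjoint R2) ∧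
      (R3 ∈ unitary (H →L[ℂ] H) ∧ IsSelfAdjoint R3) ∧
      U = R1 * R2 * R3 := by
  rintro ⟨R1, R2, R3, ⟨hR1u, hR1s⟩, ⟨hR2u, hR2s⟩, ⟨hR3u, hR3s⟩, hprod⟩
  have hR1R : R1 * R1 = 1 := by
    have h := (Unitary.mem_iff.mp hR1u).1
    rwa [hR1s] at h
  have hR2R : R2 * R2 = 1 := by
    have h := (Unitary.mem_iff.mp hR2u).1
    rwa [hR2s] at h
  set θ : ℝ := (2 * (k : ℝ) - 1) * Real.pi / 4 with hθ
  set ξ : ℂ := Complex.exp (θ * Complex.I) with hξdef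
  have hξn : ‖ξ‖ = 1 := by
    rw [hξdef, Complex.norm_exp_ofReal_mul_I]
  have hcos2 : Real.cos θ ^ 2 = 1 / 2 := by
    have h2θ : Real.cos (2 * θ) = 0 := by
      rw [show 2 * θ = (k : ℝ) * Real.pi - Real.pi / 2 by rw [hθ]; push_cast; ring,
        Real.cos_sub, Real.cos_pi_div_two, Real.sin_pi_div_two, Real.sin_nat_mul_pi]
      ring
    have := Real.cos_two_mul θ
    linarith
  have hsin2 : Real.sin θ ^ 2 = 1 / 2 := by
    nlinarith [Real.sin_sq_add_cos_sq θ]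
  have hξre : ξ.re = Real.cos θ := by rw [hξdef]; exact Complex.exp_ofReal_mul_I_re θ
  have hξim : ξ.im = Real.sin θ := by rw [hξdef]; exact Complex.exp_ofReal_mul_I_im θ
  have hnξ : Complex.normSq ξ = 1 := by
    rw [Complex.normSq_eq_norm_sq, hξn]; norm_num
  -- arc bound
  have harc : ∀ z ∈ spectrum ℂ U,
      Real.sqrt 2 / 2 < (z * (starRingEnd ℂ) ξ).re ∧ ‖z‖ = 1 := by
    intro z hz
    obtain ⟨α, hα1, hα2, rfl⟩ := hsp hz
    have hpi := Real.pi_pos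
    constructor
    · have hconjξ : (starRingEnd ℂ) ξ = Complex.exp ((-θ : ℝ) * Complex.I) := by
        rw [hξdef, ← Complex.exp_conj]
        congr 1
        simp
      have hprodz : Complex.exp ((2 * Real.pi * α : ℝ) * Complex.I) * (starRingEnd ℂ) ξ
          = Complex.exp ((2 * Real.pi * α - θ : ℝ) * Complex.I) := by
        rw [hconjξ, ← Complex.exp_add]
        congr 1
        push_cast
        ring
      have hzeq : Complex.exp (2 * Real.pi * α * Complex.I)
          = Complex.exp (((2 * Real.pi * α : ℝ) : ℂ) * Complex.I) := by
        push_cast; ring_nf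
      rw [hzeq, hprodz, Complex.exp_ofReal_mul_I_re]
      set t : ℝ := 2 * Real.pi * α - θ with htdef
      have ht : |t| < Real.pi / 4 := by
        rw [abs_lt]
        constructor
        · rw [htdef, hθ]
          nlinarith [mul_lt_mul_of_pos_left hα1 hpi]
        · rw [htdef, hθ]
          nlinarith [mul_lt_mul_of_pos_left hα2 hpi]
      have hcc := Real.cos_lt_cos_of_nonneg_of_le_pi (abs_nonneg t) (by linarith) ht
      rw [Real.cos_abs, Real.cos_pi_div_four] at hcc
      linarith
    · have hzeq : Complex.exp (2 * Real.pi * α * Complex.I)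
          = Complex.exp (((2 * Real.pi * α : ℝ) : ℂ) * Complex.I) := by
        push_cast; ring_nf
      rw [hzeq, Complex.norm_exp_ofReal_mul_I]
  -- the constant c
  have hsqrt2 : Real.sqrt 2 ^ 2 = 2 := Real.sq_sqrt (by norm_num)
  have hsqrt2pos : 0 < Real.sqrt 2 := Real.sqrt_pos.mpr (by norm_num)
  have hsqrt2lt : Real.sqrt 2 < 2 := by nlinarith
  set c : ℝ := Real.sqrt (2 - Real.sqrt 2) with hc
  have hcpos : 0 < c := Real.sqrt_pos.mpr (by nlinarith)
  have hcsq : c ^ 2 = 2 - Real.sqrt 2 := Real.sq_sqrt (by nlinarith)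
  haveI : IsStarNormal U := isStarNormal_of_mem_unitary hU
  have hUnorm : ‖U - algebraMap ℂ (H →L[ℂ] H) ξ‖ < c := by
    rw [show U - algebraMap ℂ (H →L[ℂ] H) ξ = cfc (fun z : ℂ => z - ξ) U by
      rw [cfc_sub _ _ U, cfc_id' ℂ U, cfc_const ξ U]]
    apply norm_cfc_lt hcpos
    intro z hz
    obtain ⟨hre, hzn⟩ := harc z hz
    have hnz : Complex.normSq z = 1 := by
      rw [Complex.normSq_eq_norm_sq, hzn]; norm_num
    have h1 : ‖z - ξ‖ ^ 2 = 2 - 2 * (z * (starRingEnd ℂ) ξ).re := by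
      rw [Complex.sq_norm, Complex.normSq_sub, hnz, hnξ]; ring
    have h2 : ‖z - ξ‖ ^ 2 < c ^ 2 := by rw [h1, hcsq]; nlinarith
    nlinarith [norm_nonneg (z - ξ)]
  -- V := R2 * R3
  set V : H →L[ℂ] H := R2 * R3 with hV
  have hVu : V ∈ unitary (H →L[ℂ] H) := mul_mem hR2u hR3u
  have hVM : V - ξ • R1 = R1 * (U - algebraMap ℂ (H →L[ℂ] H) ξ) := by
    rw [hprod, mul_sub]
    congr 1
    · rw [hV, ← mul_assoc, ← mul_assoc, hR1R, one_mul]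
    · rw [Algebra.algebraMap_eq_smul_one, mul_smul_comm, mul_one]
  have hR1n : ‖R1‖ = 1 := CStarRing.norm_of_mem_unitary hR1u
  have hVMnorm : ‖V - ξ • R1‖ < c := by
    rw [hVM]
    calc ‖R1 * (U - algebraMap ℂ (H →L[ℂ] H) ξ)‖
        ≤ ‖R1‖ * ‖U - algebraMap ℂ (H →L[ℂ] H) ξ‖ := norm_mul_le _ _
      _ = ‖U - algebraMap ℂ (H →L[ℂ] H) ξ‖ := by rw [hR1n, one_mul]
      _ < c := hUnorm
  -- conjugation closure of the spectrum of V
  have hconj : ∀ w ∈ spectrum ℂ V, (starRingEnd ℂ) w ∈ spectrum ℂ V := by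
    intro w hw
    have h1 : spectrum ℂ (R2 * V * R2) = spectrum ℂ V :=
      spectrum.units_conjugate (u := ⟨R2, R2, hR2R, hR2R⟩)
    have h2 : star V = R2 * V * R2 := by
      rw [hV, star_mul, hR3s, hR2s, ← mul_assoc, hR2R, one_mul]
    have h3 : spectrum ℂ (star V) = spectrum ℂ V := by rw [h2]; exact h1
    rw [← h3, spectrum.map_star]
    simpa using hw
  -- key pointwise estimate on the spectrum of V
  have hkey : ∀ w ∈ spectrum ℂ V, 1 / 2 < ((w * (starRingEnd ℂ) ξ).re) ^ 2 := by
    intro w hw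
    have hwn : ‖w‖ = 1 := by simpa using spectrum.subset_circle_of_unitary hVu hw
    have hmin := aux_min_le R1 V hR1u hR1s hR1R hVu ξ hξn w hw
    have hminc : min ‖w - ξ‖ ‖w + ξ‖ < c := lt_of_le_of_lt hmin hVMnorm
    have hnw : Complex.normSq w = 1 := by
      rw [Complex.normSq_eq_norm_sq, hwn]; norm_num
    set t : ℝ := (w * (starRingEnd ℂ) ξ).re with htdef
    have hsub : ‖w - ξ‖ ^ 2 = 2 - 2 * t := by
      rw [Complex.sq_norm, Complex.normSq_sub, hnw, hnξ]; ring
    have hadd : ‖w + ξ‖ ^ 2 = 2 + 2 * t := by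
      rw [Complex.sq_norm, Complex.normSq_add, hnw, hnξ]; ring
    rcases min_cases ‖w - ξ‖ ‖w + ξ‖ with ⟨hmeq, _⟩ | ⟨hmeq, _⟩
    · rw [hmeq] at hminc
      have hlt : ‖w - ξ‖ ^ 2 < c ^ 2 := by nlinarith [norm_nonneg (w - ξ)]
      rw [hsub, hcsq] at hlt
      nlinarith
    · rw [hmeq] at hminc
      have hlt : ‖w + ξ‖ ^ 2 < c ^ 2 := by nlinarith [norm_nonneg (w + ξ)]
      rw [hadd, hcsq] at hlt
      nlinarith
  -- finish
  obtain ⟨w, hw⟩ := spectrum.nonempty V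
  have h1 := hkey w hw
  have h2 := hkey _ (hconj w hw)
  have hwn : ‖w‖ = 1 := by simpa using spectrum.subset_circle_of_unitary hVu hw
  have hnw : Complex.normSq w = 1 := by
    rw [Complex.normSq_eq_norm_sq, hwn]; norm_num
  have hxy : w.re ^ 2 + w.im ^ 2 = 1 := by
    rw [Complex.normSq_apply] at hnw
    nlinarith
  have e1 : (w * (starRingEnd ℂ) ξ).re = w.re * ξ.re + w.im * ξ.im := by
    simp [Complex.mul_re, Complex.conj_re, Complex.conj_im]
    try ring
  have e2 : ((starRingEnd ℂ) w * (starRingEnd ℂ) ξ).re = w.re * ξ.re - w.im * ξ.im := by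
    simp [Complex.mul_re, Complex.conj_re, Complex.conj_im]
    try ring
  rw [e1] at h1
  rw [e2] at h2
  have ha2 : ξ.re ^ 2 = 1 / 2 := by rw [hξre]; exact hcos2
  have hb2 : ξ.im ^ 2 = 1 / 2 := by rw [hξim]; exact hsin2
  have hfin : (w.re * ξ.re + w.im * ξ.im) ^ 2 + (w.re * ξ.re - w.im * ξ.im) ^ 2
      = 2 * w.re ^ 2 * ξ.re ^ 2 + 2 * w.im ^ 2 * ξ.im ^ 2 := by ring
  have hfin2 : 2 * w.re ^ 2 * ξ.re ^ 2 + 2 * w.im ^ 2 * ξ.im ^ 2 = w.re ^ 2 + w.im ^ 2 := by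
    rw [ha2, hb2]; ring
  linarith [hxy, hfin, hfin2, h1, h2]
end
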